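/- arXiv:1904.01051 — 4 statements merged into one kernel-verified Lean document; each statement's English description precedes it below -/
import Mathlib

section
/- Any generic length vector is equivalent to a strongly generic one: if ℓ ∈ ℝ^r is generic, then there exists a strongly generic ℓ' ∈ ℝ^r such that a subset J ⊆ {1,...,r} is ℓ-long if and only if it is ℓ'-long. -/
open Finset

/-- `J` is `ℓ`-long if the sum of `ℓ` over `J` exceeds the sum over its complement. -/
def IsLong {r : ℕ} (ℓ : Fin r → ℝ) (J : Finset (Fin r)) : Prop :=
  ∑ j ∈ Jᶜ, ℓ j < ∑ j ∈ J, ℓ j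

/-- `ℓ` is generic if no subset sum equals the complementary sum. -/
def IsGeneric {r : ℕ} (ℓ : Fin r → ℝ) : Prop :=
  ∀ J : Finset (Fin r), ∑ j ∈ J, ℓ j ≠ ∑ j ∈ Jᶜ, ℓ j

open scoped Classical in
/-- `σ_ℓ(J)`: the number of `j ∈ J` such that `J \ {j}` is `ℓ`-short. -/
noncomputable def sigmaL {r : ℕ} (ℓ : Fin r → ℝ) (J : Finset (Fin r)) : ℕ :=
  (J.filter (fun j => ¬ IsLong ℓ (J.erase j))).card

/-- `μ(ℓ) = min { σ_ℓ(J) : J ℓ-long, σ_ℓ(J) > 0 }`. -/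
noncomputable def muL {r : ℕ} (ℓ : Fin r → ℝ) : ℕ :=
  sInf {n : ℕ | 0 < n ∧ ∃ J : Finset (Fin r), IsLong ℓ J ∧ sigmaL ℓ J = n}

/-- `ℓ` is strongly generic if distinct subsets have distinct sums. -/
def IsStronglyGeneric {r : ℕ} (ℓ : Fin r → ℝ) : Prop :=
  ∀ σ τ : Finset (Fin r), σ ≠ τ → ∑ j ∈ σ, ℓ j ≠ ∑ j ∈ τ, ℓ j

/-!
Perturb `ℓ` along a strongly generic direction `w` (the binary weights `2 ^ j`). Each equation
`ℓ(σ) + t w(σ) = ℓ(τ) + t w(τ)` with `σ ≠ τ` has at most one solution `t`, so `ℓ + t • w` is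
strongly generic for all but finitely many `t`. Genericity says that every `J` is `ℓ`-long or
has an `ℓ`-long complement, and being long is an open condition, so for `t` close to `0` the
vector `ℓ + t • w` has the same long subsets as `ℓ`.
-/

open Filter Topology

variable {r : ℕ}

lemma IsLong.not_isLong_compl {v : Fin r → ℝ} {J : Finset (Fin r)} (h : IsLong v J) :
    ¬ IsLong v Jᶜ := by
  unfold IsLong at *
  rw [compl_compl]
  exact h.not_gt

lemma IsGeneric.isLong_or_isLong_compl {ℓ : Fin r → ℝ} (hg : IsGeneric ℓ) (J : Finset (Fin r)) :
    IsLong ℓ J ∨ IsLong ℓ Jᶜ := by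
  unfold IsLong
  rw [compl_compl]
  exact (hg J).symm.lt_or_gt

lemma isOpen_setOf_isLong (J : Finset (Fin r)) : IsOpen {v : Fin r → ℝ | IsLong v J} :=
  isOpen_lt (continuous_finsetSum _ fun j _ => continuous_apply j)
    (continuous_finsetSum _ fun j _ => continuous_apply j)

lemma IsGeneric.eventually_isLong_iff {ℓ : Fin r → ℝ} (hg : IsGeneric ℓ) :
    ∀ᶠ v in 𝓝 ℓ, ∀ J, IsLong ℓ J ↔ IsLong v J := by
  refine eventually_all.2 fun J => ?_
  rcases hg.isLong_or_isLong_compl J with hJ | hJc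
  · filter_upwards [(isOpen_setOf_isLong J).mem_nhds hJ] with v hv
    exact iff_of_true hJ hv
  · filter_upwards [(isOpen_setOf_isLong Jᶜ).mem_nhds hJc] with v hv
    have hJ : ¬ IsLong ℓ J := fun h => h.not_isLong_compl hJc
    exact iff_of_false hJ fun h => h.not_isLong_compl hv

lemma isStronglyGeneric_two_pow : IsStronglyGeneric fun j : Fin r => (2 : ℝ) ^ (j : ℕ) := by
  intro σ τ hστ h
  have hcast : ∀ ρ : Finset (Fin r),
      ∑ j ∈ ρ, (2 : ℝ) ^ (j : ℕ) = ((∑ i ∈ ρ.map Fin.valEmbedding, 2 ^ i : ℕ) : ℝ) := by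
    intro ρ
    push_cast [sum_map]
    rfl
  rw [hcast, hcast, Nat.cast_inj] at h
  exact hστ (map_injective Fin.valEmbedding (geomSum_injective le_rfl h))

lemma sum_add_smul (ℓ w : Fin r → ℝ) (t : ℝ) (σ : Finset (Fin r)) :
    ∑ j ∈ σ, (ℓ + t • w) j = ∑ j ∈ σ, ℓ j + t * ∑ j ∈ σ, w j := by
  simp only [Pi.add_apply, Pi.smul_apply, smul_eq_mul, sum_add_distrib, mul_sum]

lemma IsStronglyGeneric.eventually_add_smul {w : Fin r → ℝ} (hw : IsStronglyGeneric w)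
    (ℓ : Fin r → ℝ) : ∀ᶠ t : ℝ in cofinite, IsStronglyGeneric (ℓ + t • w) := by
  refine eventually_all.2 fun σ => eventually_all.2 fun τ => ?_
  by_cases hστ : σ = τ
  · exact Eventually.of_forall fun _ h => absurd hστ h
  refine eventually_cofinite.2 (Set.Subsingleton.finite ?_)
  intro s hs t ht
  simp only [ne_eq, not_forall, not_not, exists_prop, Set.mem_ofPred_eq, sum_add_smul] at hs ht
  have hslope : ∑ j ∈ σ, w j - ∑ j ∈ τ, w j ≠ 0 := sub_ne_zero.2 (hw σ τ hστ)
  have : (s - t) * (∑ j ∈ σ, w j - ∑ j ∈ τ, w j) = 0 := by linear_combination hs.2 - ht.2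
  exact sub_eq_zero.1 ((mul_eq_zero.1 this).resolve_right hslope)

theorem exists_stronglyGeneric_equivalent {r : ℕ} (ℓ : Fin r → ℝ)
    (hg : IsGeneric ℓ) :
    ∃ ℓ' : Fin r → ℝ, IsStronglyGeneric ℓ' ∧
      ∀ J : Finset (Fin r), IsLong ℓ J ↔ IsLong ℓ' J := by
  set w : Fin r → ℝ := fun j => (2 : ℝ) ^ (j : ℕ)
  have hsg : ∀ᶠ t in 𝓝[≠] (0 : ℝ), IsStronglyGeneric (ℓ + t • w) :=
    (isStronglyGeneric_two_pow.eventually_add_smul ℓ).filter_mono (nhdsNE_le_cofinite 0)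
  have hline : Tendsto (fun t : ℝ => ℓ + t • w) (𝓝[≠] 0) (𝓝 ℓ) := by
    refine Tendsto.mono_left ?_ nhdsWithin_le_nhds
    simpa using ((continuous_id.smul continuous_const).const_add ℓ).tendsto (0 : ℝ)
  have hlong : ∀ᶠ t in 𝓝[≠] (0 : ℝ), ∀ J, IsLong ℓ J ↔ IsLong (ℓ + t • w) J :=
    hline.eventually hg.eventually_isLong_iff
  obtain ⟨t, ht⟩ := (hsg.and hlong).exists
  exact ⟨ℓ + t • w, ht⟩
end

section
/- Let ℓ ∈ ℝ^r be a generic length vector with nonnegative components and let k = μ(ℓ). Then every subset of {1,...,r} with fewer than k elements is ℓ-short. -/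
open Finset

/-!
Inside an `ℓ`-long set `J` pick a minimal `ℓ`-long subset `K`. Removing any element of `K`
makes it short, so `σ_ℓ(K) = |K|`; and `K ≠ ∅` because the empty set is short when `ℓ ≥ 0`.
Hence `μ(ℓ) ≤ σ_ℓ(K) = |K| ≤ |J|`.
-/

section

variable {r : ℕ} {ℓ : Fin r → ℝ} {K : Finset (Fin r)}

lemma not_isLong_empty (hpos : ∀ j, 0 ≤ ℓ j) : ¬ IsLong ℓ ∅ := by
  simpa [IsLong] using sum_nonneg fun j _ ↦ hpos j

lemma sigmaL_eq_card_of_minimal (hK : Minimal (IsLong ℓ) K) : sigmaL ℓ K = K.card := by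
  classical
  rw [sigmaL, filter_true_of_mem]
  exact fun j hj ↦ hK.not_prop_of_lt (erase_ssubset hj)

lemma muL_le_sigmaL (hK : IsLong ℓ K) (hσ : 0 < sigmaL ℓ K) : muL ℓ ≤ sigmaL ℓ K :=
  Nat.sInf_le ⟨hσ, K, hK, rfl⟩

end

theorem short_of_card_lt_mu_general {r : ℕ} (ℓ : Fin r → ℝ)
    (hpos : ∀ j, 0 ≤ ℓ j) (J : Finset (Fin r)) (hJ : J.card < muL ℓ) :
    ¬ IsLong ℓ J := by
  intro hlong
  obtain ⟨K, hKJ, hK⟩ := exists_minimal_le_of_wellFoundedLT (IsLong ℓ) J hlong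
  have hKne : K.Nonempty :=
    nonempty_iff_ne_empty.2 fun h ↦ not_isLong_empty hpos (h ▸ hK.prop)
  have hσ : sigmaL ℓ K = K.card := sigmaL_eq_card_of_minimal hK
  have hμ : muL ℓ ≤ K.card := hσ ▸ muL_le_sigmaL hK.prop (hσ ▸ hKne.card_pos)
  exact (hμ.trans (card_le_card hKJ)).not_gt hJ

theorem short_of_card_lt_mu {r : ℕ} (ℓ : Fin r → ℝ) (hg : IsGeneric ℓ)
    (hpos : ∀ j, 0 ≤ ℓ j) (J : Finset (Fin r)) (hJ : J.card < muL ℓ) :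
    ¬ IsLong ℓ J :=
  short_of_card_lt_mu_general ℓ hpos J hJ
end

section
/- Let r = 2m+1 ≥ 3 be odd and ℓ ∈ ℝ^r a generic length vector with nonnegative weakly increasing components. Then μ(ℓ) = m if and only if ℓ is equivalent to (0,0,1,...,1). -/
open Finset

/-!
Let `T = {2, …, 2m}`, so that `J` is long for `ε = (0,0,1,…,1)` iff `#(J ∩ T) ≥ m`. If the long sets
of `ℓ` are exactly these, every long `J` with `σ(J) > 0` has `#(J ∩ T) = m` and loses its longness
when any element of `J ∩ T` is removed; this gives `μ(ℓ) = m`.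

Conversely let `μ(ℓ) = m`. A long set with `σ = m` forces a long `m`-set to exist (otherwise it
would have `m + 1` elements, all of them removable, and `σ = m + 1`). Take a long `m`-set `W` of
minimal index sum, so that trading any `j ∈ W` for a smaller index outside `W` makes it short. If
three indices outside `W` lay below some `j ∈ W`, then `F = {j} ∪ Wᶜ` would be long with
`0 < σ(F) ≤ m - 1`. Hence `W ⊆ {0, …, m + 1}`, and by monotonicity `ℓ(W) ≤ ℓ({2, …, m + 1}) ≤ ℓ(O)`
for every `m`-subset `O` of `T`. So every `J` with `#(J ∩ T) ≥ m` is long, and since `J` and `Jᶜ`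
are never both long, these are all the long sets.
-/

lemma Finset.sum_le_sum_of_card_eq_of_le {ι M : Type*} [AddCommMonoid M] [LinearOrder M]
    [IsOrderedCancelAddMonoid M] [DecidableEq ι] {s t : Finset ι} {f : ι → M} (hst : #s = #t)
    (h : ∀ a ∈ s \ t, ∀ b ∈ t \ s, f a ≤ f b) : ∑ i ∈ s, f i ≤ ∑ i ∈ t, f i := by
  rw [← sum_sdiff_le_sum_sdiff]
  rcases (s \ t).eq_empty_or_nonempty with he | hne
  · have ht : t \ s = ∅ := by rw [← card_eq_zero, ← card_sdiff_comm hst, he, card_empty]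
    rw [he, ht]
  · calc ∑ i ∈ s \ t, f i ≤ #(s \ t) • (s \ t).sup' hne f :=
          sum_le_card_nsmul _ _ _ fun a ha => le_sup' f ha
      _ = #(t \ s) • (s \ t).sup' hne f := by rw [card_sdiff_comm hst]
      _ ≤ ∑ i ∈ t \ s, f i :=
          card_nsmul_le_sum _ _ _ fun b hb => sup'_le hne f fun a ha => h a ha b hb

lemma Finset.card_filter_add_card_filter_compl {α : Type*} [Fintype α] [DecidableEq α]
    (p : α → Prop) [DecidablePred p] (s : Finset α) :
    #(s.filter p) + #(sᶜ.filter p) = #(univ.filter p) := by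
  rw [← card_union_of_disjoint (disjoint_filter_filter disjoint_compl_right), ← filter_union,
    union_compl]

lemma Fin.val_add_one_le_card_add_card_compl_filter_lt {r : ℕ} {W : Finset (Fin r)} {j : Fin r}
    (hj : j ∈ W) : (j : ℕ) + 1 ≤ #W + #{i ∈ Wᶜ | i < j} := by
  have hIio : Iio j ⊆ W.erase j ∪ {i ∈ Wᶜ | i < j} := fun i hi => by
    rw [mem_Iio] at hi
    by_cases hiW : i ∈ W
    · exact mem_union_left _ (mem_erase.2 ⟨hi.ne, hiW⟩)
    · exact mem_union_right _ (mem_filter.2 ⟨mem_compl.2 hiW, hi⟩)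
  have := (card_le_card hIio).trans (card_union_le _ _)
  rw [Fin.card_Iio, card_erase_of_mem hj] at this
  have := card_pos.2 ⟨j, hj⟩
  omega

section IsLong

variable {r : ℕ} {ℓ : Fin r → ℝ} {J K : Finset (Fin r)}

lemma isLong_iff_lt_two_mul_sum : IsLong ℓ J ↔ ∑ j, ℓ j < 2 * ∑ j ∈ J, ℓ j := by
  rw [IsLong, ← sum_add_sum_compl J ℓ]
  constructor <;> intro h <;> linarith

lemma IsLong.of_sum_le (hJ : IsLong ℓ J) (h : ∑ j ∈ J, ℓ j ≤ ∑ j ∈ K, ℓ j) : IsLong ℓ K := by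
  rw [isLong_iff_lt_two_mul_sum] at hJ ⊢
  linarith

lemma IsLong.mono (hpos : ∀ j, 0 ≤ ℓ j) (hJ : IsLong ℓ J) (h : J ⊆ K) : IsLong ℓ K :=
  hJ.of_sum_le (sum_le_sum_of_subset_of_nonneg h fun j _ _ => hpos j)

lemma IsLong.not_compl (hJ : IsLong ℓ J) : ¬ IsLong ℓ Jᶜ := by
  rw [IsLong, compl_compl]
  exact hJ.asymm

end IsLong

lemma IsGeneric.isLong_compl_iff {r : ℕ} {ℓ : Fin r → ℝ} (hg : IsGeneric ℓ) (J : Finset (Fin r)) :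
    IsLong ℓ Jᶜ ↔ ¬ IsLong ℓ J := by
  refine ⟨fun h hJ => hJ.not_compl h, fun h => ?_⟩
  rw [IsLong, compl_compl]
  exact lt_of_le_of_ne (not_lt.1 h) (hg J)

section Sigma

open scoped Classical

variable {r : ℕ} {ℓ : Fin r → ℝ} {J : Finset (Fin r)}

lemma card_le_sigmaL {S : Finset (Fin r)} (hS : S ⊆ J) (h : ∀ g ∈ S, ¬ IsLong ℓ (J.erase g)) :
    #S ≤ sigmaL ℓ J :=
  card_le_card fun g hg => mem_filter.2 ⟨hS hg, h g hg⟩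

lemma sigmaL_le_card {S : Finset (Fin r)} (h : ∀ g ∈ J, g ∉ S → IsLong ℓ (J.erase g)) :
    sigmaL ℓ J ≤ #S :=
  card_le_card fun g hg => by
    rw [mem_filter] at hg
    by_contra hgS
    exact hg.2 (h g hg.1 hgS)

lemma exists_not_isLong_erase_of_sigmaL_pos (h : 0 < sigmaL ℓ J) :
    ∃ j ∈ J, ¬ IsLong ℓ (J.erase j) := by
  obtain ⟨j, hj⟩ := card_pos.1 h
  exact ⟨j, (mem_filter.1 hj).1, (mem_filter.1 hj).2⟩

lemma muL_le_sigmaL_s7 (hJ : IsLong ℓ J) (h : 0 < sigmaL ℓ J) : muL ℓ ≤ sigmaL ℓ J :=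
  Nat.sInf_le ⟨h, J, hJ, rfl⟩

lemma exists_isLong_sigmaL_eq_muL (h : 0 < muL ℓ) : ∃ J, IsLong ℓ J ∧ sigmaL ℓ J = muL ℓ := by
  have hne : {n : ℕ | 0 < n ∧ ∃ J : Finset (Fin r), IsLong ℓ J ∧ sigmaL ℓ J = n}.Nonempty :=
    Set.nonempty_iff_ne_empty.2 fun he => h.ne' (by rw [muL, he, Nat.sInf_empty])
  exact (Nat.sInf_mem hne).2

end Sigma

lemma muL_eq_of_isLong_iff_le_card_filter {r k : ℕ} {ℓ : Fin r → ℝ} {p : Fin r → Prop}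
    [DecidablePred p] (hk : 0 < k) (hkp : k ≤ #(univ.filter p))
    (h : ∀ J, IsLong ℓ J ↔ k ≤ #(J.filter p)) : muL ℓ = k := by
  have short_erase : ∀ J : Finset (Fin r), #(J.filter p) ≤ k → ∀ g ∈ J, p g →
      ¬ IsLong ℓ (J.erase g) := by
    intro J hJ g hgJ hg
    rw [h, filter_erase, card_erase_of_mem (mem_filter.2 ⟨hgJ, hg⟩)]
    omega
  obtain ⟨A, hAp, hAk⟩ := exists_subset_card_eq hkp
  have hAfilter : #(A.filter p) = k := by
    rw [filter_true_of_mem fun j hj => (mem_filter.1 (hAp hj)).2, hAk]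
  have hA : IsLong ℓ A := (h A).2 hAfilter.ge
  have hσA : sigmaL ℓ A = k := le_antisymm
    (hAk ▸ sigmaL_le_card fun g hg hgA => absurd hg hgA)
    (hAk ▸ card_le_sigmaL subset_rfl fun g hg =>
      short_erase A hAfilter.le g hg (mem_filter.1 (hAp hg)).2)
  refine le_antisymm (hσA ▸ muL_le_sigmaL_s7 hA (hσA ▸ hk)) (le_csInf ⟨k, hk, A, hA, hσA⟩ ?_)
  rintro _ ⟨hσ, J, hJ, rfl⟩
  obtain ⟨j, hjJ, hj⟩ := exists_not_isLong_erase_of_sigmaL_pos hσ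
  have hJk : #(J.filter p) = k := by
    have := (h J).1 hJ
    have := pred_card_le_card_erase (a := j) (s := J.filter p)
    rw [h, filter_erase] at hj
    omega
  calc k = #(J.filter p) := hJk.symm
    _ ≤ sigmaL ℓ J := card_le_sigmaL (filter_subset _ _) fun g hg =>
        short_erase J hJk.le g (mem_filter.1 hg).1 (mem_filter.1 hg).2

lemma exists_isLong_card_eq_forall_swap_down {r k : ℕ} {ℓ : Fin r → ℝ} {W₀ : Finset (Fin r)}
    (hW₀ : IsLong ℓ W₀) (hc : #W₀ = k) :
    ∃ W : Finset (Fin r), IsLong ℓ W ∧ #W = k ∧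
      ∀ j ∈ W, ∀ i ∉ W, i < j → ¬ IsLong ℓ (insert i (W.erase j)) := by
  classical
  obtain ⟨W, hWmem, hWmin⟩ := exists_min_image {W : Finset (Fin r) | IsLong ℓ W ∧ #W = k}
    (fun W => ∑ i ∈ W, (i : ℕ)) ⟨W₀, mem_filter.2 ⟨mem_univ _, hW₀, hc⟩⟩
  obtain ⟨hW, hWc⟩ := (mem_filter.1 hWmem).2
  refine ⟨W, hW, hWc, fun j hj i hi hij hlong => ?_⟩
  have hi' : i ∉ W.erase j := fun h => hi (mem_of_mem_erase h)
  have hcard : #(insert i (W.erase j)) = k := by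
    rw [card_insert_of_notMem hi', card_erase_of_mem hj, ← hWc,
      Nat.sub_add_cancel (card_pos.2 ⟨j, hj⟩)]
  have hmin := hWmin _ (mem_filter.2 ⟨mem_univ _, hlong, hcard⟩)
  have := add_sum_erase W (fun i : Fin r => (i : ℕ)) hj
  rw [sum_insert hi'] at hmin
  rw [Fin.lt_def] at hij
  omega

section OddLength

variable {m : ℕ}

lemma card_filter_two_le_val (hm : 1 ≤ m) : #{i : Fin (2 * m + 1) | 2 ≤ i.val} = 2 * m - 1 := by
  have h := card_filter_add_card_filter_not (s := (univ : Finset (Fin (2 * m + 1))))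
    (p := fun i => 2 ≤ i.val)
  simp only [not_le, Fin.card_filter_val_lt, card_univ, Fintype.card_fin] at h
  omega

lemma isLong_eps_iff (hm : 1 ≤ m) (J : Finset (Fin (2 * m + 1))) :
    IsLong (fun j => if (j : ℕ) < 2 then (0 : ℝ) else 1) J ↔ m ≤ #{j ∈ J | 2 ≤ j.val} := by
  have hsum : ∀ K : Finset (Fin (2 * m + 1)),
      ∑ j ∈ K, (if (j : ℕ) < 2 then (0 : ℝ) else 1) = #{j ∈ K | 2 ≤ j.val} := fun K => by
    rw [natCast_card_filter]
    exact sum_congr rfl fun j _ => by split_ifs <;> first | rfl | omega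
  have := card_filter_add_card_filter_compl (fun j : Fin (2 * m + 1) => 2 ≤ j.val) J
  rw [card_filter_two_le_val hm] at this
  rw [IsLong, hsum, hsum, Nat.cast_lt]
  omega

variable {ℓ : Fin (2 * m + 1) → ℝ}

lemma exists_card_eq_isLong (hg : IsGeneric ℓ) (hpos : ∀ j, 0 ≤ ℓ j)
    {J : Finset (Fin (2 * m + 1))} (hJ : IsLong ℓ J) (hσ : 0 < sigmaL ℓ J) (hσm : sigmaL ℓ J ≤ m) :
    ∃ W : Finset (Fin (2 * m + 1)), #W = m ∧ IsLong ℓ W := by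
  by_contra! hnone
  have hsmall : ∀ K : Finset (Fin (2 * m + 1)), #K ≤ m → ¬ IsLong ℓ K := fun K hK hKl => by
    obtain ⟨W, hKW, -, hW⟩ := exists_subsuperset_card_eq (subset_univ K) hK (by simp; omega)
    exact hnone W hW (hKl.mono hpos hKW)
  have hJcard : m + 1 ≤ #J := by
    by_contra!
    exact hsmall J (by omega) hJ
  obtain ⟨j, hjJ, hj⟩ := exists_not_isLong_erase_of_sigmaL_pos hσ
  have hcompl : m + 1 ≤ #(J.erase j)ᶜ := by
    by_contra!
    exact hsmall _ (by omega) ((hg.isLong_compl_iff _).2 hj)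
  rw [card_compl, card_erase_of_mem hjJ, Fintype.card_fin] at hcompl
  have : #J ≤ sigmaL ℓ J := card_le_sigmaL subset_rfl fun g hg =>
    hsmall _ (by rw [card_erase_of_mem hg]; omega)
  omega

lemma card_compl_filter_lt_le_two (hg : IsGeneric ℓ) (hpos : ∀ j, 0 ≤ ℓ j)
    (hμ : ∀ F, IsLong ℓ F → 0 < sigmaL ℓ F → m ≤ sigmaL ℓ F) {W : Finset (Fin (2 * m + 1))}
    (hW : IsLong ℓ W) (hWc : #W = m)
    (hdown : ∀ j ∈ W, ∀ i ∉ W, i < j → ¬ IsLong ℓ (insert i (W.erase j)))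
    {j : Fin (2 * m + 1)} (hj : j ∈ W) : #{i ∈ Wᶜ | i < j} ≤ 2 := by
  by_contra! h3
  obtain ⟨i₀, hi₀⟩ := card_pos.1 (by omega : 0 < #{i ∈ Wᶜ | i < j})
  have hjW : j ∉ Wᶜ := notMem_compl.2 hj
  have hlong_erase : ∀ i ∈ Wᶜ, i < j → IsLong ℓ ((insert j Wᶜ).erase i) := fun i hi hij => by
    have : (insert j Wᶜ).erase i = (insert i (W.erase j))ᶜ := by
      ext x
      simp only [mem_erase, mem_insert, mem_compl]
      grind
    rw [this, hg.isLong_compl_iff]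
    exact hdown j hj i (mem_compl.1 hi) hij
  have hF : IsLong ℓ (insert j Wᶜ) :=
    (hlong_erase i₀ (mem_filter.1 hi₀).1 (mem_filter.1 hi₀).2).mono hpos (erase_subset _ _)
  have hσpos : 0 < sigmaL ℓ (insert j Wᶜ) := card_le_sigmaL (S := {j})
    (singleton_subset_iff.2 (mem_insert_self _ _))
    (by simpa [erase_insert hjW] using hW.not_compl)
  have hσle : sigmaL ℓ (insert j Wᶜ) ≤ #(insert j {i ∈ Wᶜ | ¬ i < j}) :=
    sigmaL_le_card fun g hg hgS => by
      simp only [mem_insert, mem_filter, not_or, not_and, not_not] at hg hgS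
      exact hlong_erase g (hg.resolve_left hgS.1) (hgS.2 (hg.resolve_left hgS.1))
  have := card_insert_le j {i ∈ Wᶜ | ¬ i < j}
  have := card_filter_add_card_filter_not (s := Wᶜ) (p := (· < j))
  rw [card_compl, hWc, Fintype.card_fin] at this
  have := hμ _ hF hσpos
  omega

lemma isLong_of_le_card_filter (hpos : ∀ j, 0 ≤ ℓ j) (hmono : Monotone ℓ) (hm : 1 ≤ m)
    {W : Finset (Fin (2 * m + 1))} (hW : IsLong ℓ W) (hWc : #W = m)
    (hWlt : ∀ j ∈ W, j.val < m + 2) {J : Finset (Fin (2 * m + 1))}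
    (hJ : m ≤ #{j ∈ J | 2 ≤ j.val}) : IsLong ℓ J := by
  obtain ⟨O, hOJ, hOc⟩ := exists_subset_card_eq hJ
  let A := Icc (⟨2, by omega⟩ : Fin (2 * m + 1)) ⟨m + 1, by omega⟩
  have hA : ∀ i, i ∈ A ↔ 2 ≤ i.val ∧ i.val < m + 2 := fun i => by
    simp only [A, Finset.mem_Icc, Fin.le_def]
    omega
  have hAc : #A = m := by simp [A]
  have hWA : ∑ i ∈ W, ℓ i ≤ ∑ i ∈ A, ℓ i := sum_le_sum_of_card_eq_of_le (hWc.trans hAc.symm)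
    fun a ha b hb => by
      rw [mem_sdiff, hA] at ha hb
      exact hmono (Fin.le_def.2 (by have := hWlt a ha.1; omega))
  have hAO : ∑ i ∈ A, ℓ i ≤ ∑ i ∈ O, ℓ i := sum_le_sum_of_card_eq_of_le (hAc.trans hOc.symm)
    fun a ha b hb => by
      rw [mem_sdiff, hA] at ha hb
      exact hmono (Fin.le_def.2 (by have := (mem_filter.1 (hOJ hb.1)).2; omega))
  exact (hW.of_sum_le (hWA.trans hAO)).mono hpos (hOJ.trans (filter_subset _ _))

lemma isLong_iff_le_card_filter_of_muL_eq (hg : IsGeneric ℓ) (hpos : ∀ j, 0 ≤ ℓ j)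
    (hmono : Monotone ℓ) (hm : 1 ≤ m) (hμ : muL ℓ = m) (J : Finset (Fin (2 * m + 1))) :
    IsLong ℓ J ↔ m ≤ #{j ∈ J | 2 ≤ j.val} := by
  have hμ_le : ∀ F, IsLong ℓ F → 0 < sigmaL ℓ F → m ≤ sigmaL ℓ F := fun F hF hσ =>
    hμ.ge.trans (muL_le_sigmaL_s7 hF hσ)
  obtain ⟨J₀, hJ₀, hσ₀⟩ := exists_isLong_sigmaL_eq_muL (ℓ := ℓ) (by omega)
  obtain ⟨W₀, hW₀c, hW₀⟩ := exists_card_eq_isLong hg hpos hJ₀ (by omega) (by omega)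
  obtain ⟨W, hW, hWc, hdown⟩ := exists_isLong_card_eq_forall_swap_down hW₀ hW₀c
  have hWlt : ∀ j ∈ W, j.val < m + 2 := fun j hj => by
    have := card_compl_filter_lt_le_two hg hpos hμ_le hW hWc hdown hj
    have := Fin.val_add_one_le_card_add_card_compl_filter_lt hj
    omega
  have hlong : ∀ K, m ≤ #{j ∈ K | 2 ≤ j.val} → IsLong ℓ K := fun K =>
    isLong_of_le_card_filter hpos hmono hm hW hWc hWlt
  refine ⟨fun hJ => ?_, hlong J⟩
  by_contra! hlt
  have := card_filter_add_card_filter_compl (fun j : Fin (2 * m + 1) => 2 ≤ j.val) J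
  rw [card_filter_two_le_val hm] at this
  exact hJ.not_compl (hlong _ (by omega))

end OddLength

theorem mu_eq_m_iff_odd {r m : ℕ} (hr : r = 2 * m + 1) (hm : 1 ≤ m)
    (ℓ : Fin r → ℝ) (hg : IsGeneric ℓ) (hpos : ∀ j, 0 ≤ ℓ j)
    (hmono : Monotone ℓ) :
    muL ℓ = m ↔
      ∀ J : Finset (Fin r),
        IsLong ℓ J ↔ IsLong (fun j => if (j : ℕ) < 2 then (0 : ℝ) else 1) J := by
  subst hr
  simp only [isLong_eps_iff hm]
  exact ⟨isLong_iff_le_card_filter_of_muL_eq hg hpos hmono hm,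
    muL_eq_of_isLong_iff_le_card_filter hm (by rw [card_filter_two_le_val hm]; omega)⟩
end

section
/- For r = 2m+2 ≥ 4 even, the length vector ℓ = (1,1,1,2,...,2) ∈ ℝ^r (three entries 1 followed by 2m−1 entries 2) is generic and satisfies μ(ℓ) = m. -/
open Finset

/-! With integer lengths `w` of odd total `T`, no subset sum can equal `T/2`, and `J \ {j}` is short
exactly when `2 ∑_J w ≤ T + 2 w j`. For `ℓ = (1,1,1,2,…,2)` we have `T = 4m + 1`, so a long `J`
has `s = a + 2b ≥ 2m + 1`, where `a ≤ 3` and `b` count its ones and twos. If `s = 2m + 1` every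
element may be removed and `σ = a + b ≥ m + 1`; if `s = 2m + 2` exactly the twos may be removed and
`σ = b ≥ m`, with equality for `a = 2`, `b = m`; if `s ≥ 2m + 3` then `σ = 0`. -/

section NatLengths

variable {r : ℕ} (w : Fin r → ℕ)

theorem isLong_natCast_iff (J : Finset (Fin r)) :
    IsLong (fun j => (w j : ℝ)) J ↔ ∑ j, w j < 2 * ∑ j ∈ J, w j := by
  have hsplit := sum_add_sum_compl J w
  rw [IsLong, ← Nat.cast_sum, ← Nat.cast_sum, Nat.cast_lt]
  omega

theorem isGeneric_natCast_of_odd (hw : Odd (∑ j, w j)) : IsGeneric (fun j => (w j : ℝ)) := by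
  intro J hJ
  rw [← Nat.cast_sum, ← Nat.cast_sum, Nat.cast_inj] at hJ
  rw [← sum_add_sum_compl J w, ← hJ] at hw
  exact Nat.not_odd_iff_even.mpr ⟨_, rfl⟩ hw

theorem sigmaL_natCast (J : Finset (Fin r)) :
    sigmaL (fun j => (w j : ℝ)) J = #{j ∈ J | 2 * ∑ i ∈ J, w i ≤ ∑ i, w i + 2 * w j} := by
  classical
  unfold sigmaL
  congr 1
  refine filter_congr fun j hj => ?_
  rw [isLong_natCast_iff, not_lt, ← sum_erase_add J w hj]
  omega

end NatLengths

section OneOneOneTwo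

variable {n : ℕ}

def oneOneOneTwo : Fin n → ℕ := fun j => if j.val < 3 then 1 else 2

theorem one_le_oneOneOneTwo (j : Fin n) : 1 ≤ oneOneOneTwo j := by
  unfold oneOneOneTwo; split_ifs <;> omega

theorem oneOneOneTwo_le_two (j : Fin n) : oneOneOneTwo j ≤ 2 := by
  unfold oneOneOneTwo; split_ifs <;> omega

def numOnes (J : Finset (Fin n)) : ℕ := #{j ∈ J | j.val < 3}

def numTwos (J : Finset (Fin n)) : ℕ := #{j ∈ J | ¬ j.val < 3}

theorem sum_oneOneOneTwo (J : Finset (Fin n)) :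
    ∑ j ∈ J, oneOneOneTwo j = numOnes J + 2 * numTwos J := by
  simp [oneOneOneTwo, sum_ite, numOnes, numTwos, mul_comm]

theorem numOnes_add_numTwos (J : Finset (Fin n)) : numOnes J + numTwos J = #J :=
  card_filter_add_card_filter_not (s := J) (fun j => j.val < 3)

theorem numOnes_le_three (J : Finset (Fin n)) : numOnes J ≤ 3 :=
  calc numOnes J ≤ #{j : Fin n | j.val < 3} :=
        card_le_card (filter_subset_filter _ (subset_univ J))
    _ = min n 3 := Fin.card_filter_val_lt
    _ ≤ 3 := min_le_right _ _

theorem numOnes_univ (hn : 3 ≤ n) : numOnes (univ : Finset (Fin n)) = 3 := by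
  rw [numOnes, Fin.card_filter_val_lt, min_eq_right hn]

theorem numTwos_univ (hn : 3 ≤ n) : numTwos (univ : Finset (Fin n)) = n - 3 := by
  have h := numOnes_add_numTwos (univ : Finset (Fin n))
  rw [numOnes_univ hn, card_univ, Fintype.card_fin] at h
  omega

theorem sum_oneOneOneTwo_univ (hn : 3 ≤ n) : ∑ j, oneOneOneTwo (n := n) j = 2 * n - 3 := by
  rw [sum_oneOneOneTwo, numOnes_univ hn, numTwos_univ hn]
  omega

theorem exists_numOnes_numTwos_eq {a b : ℕ} (ha : a ≤ numOnes (univ : Finset (Fin n)))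
    (hb : b ≤ numTwos (univ : Finset (Fin n))) :
    ∃ J : Finset (Fin n), numOnes J = a ∧ numTwos J = b := by
  rw [numOnes] at ha
  rw [numTwos] at hb
  obtain ⟨S, hS, rfl⟩ := exists_subset_card_eq ha
  obtain ⟨T, hT, rfl⟩ := exists_subset_card_eq hb
  have hS3 : ∀ j ∈ S, j.val < 3 := fun j hj => (mem_filter.1 (hS hj)).2
  have hT3 : ∀ j ∈ T, ¬ j.val < 3 := fun j hj => (mem_filter.1 (hT hj)).2
  refine ⟨S ∪ T, ?_, ?_⟩
  · rw [numOnes, filter_union, filter_true_of_mem hS3, filter_false_of_mem hT3, union_empty]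
  · rw [numTwos, filter_union, filter_false_of_mem (fun j hj => not_not.2 (hS3 j hj)),
      filter_true_of_mem hT3, empty_union]

end OneOneOneTwo

section EvenLength

variable {m : ℕ} (hm : 1 ≤ m) {J : Finset (Fin (2 * m + 2))}
include hm

theorem sum_oneOneOneTwo_univ_even : ∑ j, oneOneOneTwo (n := 2 * m + 2) j = 4 * m + 1 := by
  rw [sum_oneOneOneTwo_univ (by omega)]
  omega

theorem isLong_oneOneOneTwo_iff :
    IsLong (fun j => (oneOneOneTwo j : ℝ)) J ↔ 2 * m + 1 ≤ numOnes J + 2 * numTwos J := by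
  rw [isLong_natCast_iff, sum_oneOneOneTwo_univ_even hm, sum_oneOneOneTwo]
  omega

theorem sigmaL_oneOneOneTwo : sigmaL (fun j => (oneOneOneTwo j : ℝ)) J =
    #{j ∈ J | numOnes J + 2 * numTwos J ≤ 2 * m + oneOneOneTwo j} := by
  rw [sigmaL_natCast, sum_oneOneOneTwo_univ_even hm, sum_oneOneOneTwo]
  congr 1
  exact filter_congr fun j _ => by omega

theorem sigmaL_oneOneOneTwo_eq_card (hJ : numOnes J + 2 * numTwos J = 2 * m + 1) :
    sigmaL (fun j => (oneOneOneTwo j : ℝ)) J = #J := by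
  rw [sigmaL_oneOneOneTwo hm, hJ, filter_true_of_mem fun j _ => ?_]
  have := one_le_oneOneOneTwo j
  omega

theorem sigmaL_oneOneOneTwo_eq_numTwos (hJ : numOnes J + 2 * numTwos J = 2 * m + 2) :
    sigmaL (fun j => (oneOneOneTwo j : ℝ)) J = numTwos J := by
  rw [sigmaL_oneOneOneTwo hm, hJ, numTwos]
  congr 1
  refine filter_congr fun j _ => ?_
  unfold oneOneOneTwo
  split_ifs <;> omega

theorem sigmaL_oneOneOneTwo_eq_zero (hJ : 2 * m + 2 < numOnes J + 2 * numTwos J) :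
    sigmaL (fun j => (oneOneOneTwo j : ℝ)) J = 0 := by
  rw [sigmaL_oneOneOneTwo hm, card_eq_zero, filter_eq_empty_iff]
  intro j _
  have := oneOneOneTwo_le_two j
  omega

theorem le_sigmaL_oneOneOneTwo (hJ : IsLong (fun j => (oneOneOneTwo j : ℝ)) J)
    (hσ : 0 < sigmaL (fun j => (oneOneOneTwo j : ℝ)) J) :
    m ≤ sigmaL (fun j => (oneOneOneTwo j : ℝ)) J := by
  rw [isLong_oneOneOneTwo_iff hm] at hJ
  have h3 := numOnes_le_three J
  obtain h | h | h : numOnes J + 2 * numTwos J = 2 * m + 1 ∨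
      numOnes J + 2 * numTwos J = 2 * m + 2 ∨ 2 * m + 2 < numOnes J + 2 * numTwos J := by omega
  · rw [sigmaL_oneOneOneTwo_eq_card hm h, ← numOnes_add_numTwos]
    omega
  · rw [sigmaL_oneOneOneTwo_eq_numTwos hm h]
    omega
  · rw [sigmaL_oneOneOneTwo_eq_zero hm h] at hσ
    exact absurd hσ (lt_irrefl 0)

end EvenLength

theorem oneOneOneTwo_generic_mu (m : ℕ) (hm : 1 ≤ m) :
    IsGeneric (fun j : Fin (2 * m + 2) => if (j : ℕ) < 3 then (1 : ℝ) else 2) ∧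
      muL (fun j : Fin (2 * m + 2) => if (j : ℕ) < 3 then (1 : ℝ) else 2) = m := by
  have hℓ : (fun j : Fin (2 * m + 2) => if (j : ℕ) < 3 then (1 : ℝ) else 2) =
      fun j => (oneOneOneTwo j : ℝ) := by
    funext j
    unfold oneOneOneTwo
    split_ifs <;> norm_num
  rw [hℓ]
  refine ⟨isGeneric_natCast_of_odd _ ?_, IsLeast.csInf_eq ⟨?_, ?_⟩⟩
  · rw [sum_oneOneOneTwo_univ_even hm]
    exact ⟨2 * m, by ring⟩
  · obtain ⟨J, hJ₁, hJ₂⟩ := exists_numOnes_numTwos_eq (n := 2 * m + 2) (a := 2) (b := m)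
      (by rw [numOnes_univ (by omega)]; omega) (by rw [numTwos_univ (by omega)]; omega)
    have hs : numOnes J + 2 * numTwos J = 2 * m + 2 := by omega
    exact ⟨hm, J, (isLong_oneOneOneTwo_iff hm).2 (by omega),
      by rw [sigmaL_oneOneOneTwo_eq_numTwos hm hs, hJ₂]⟩
  · rintro _ ⟨hσ, J, hJ, rfl⟩
    exact le_sigmaL_oneOneOneTwo hm hJ hσ
end
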